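/- Let k₁ ≥ 1 and k₁₂ ≥ 1 be real numbers and let s₂, p₁, p₂ be real. Define h(t) = t^{i s₂ - i p₂ - 1/2} · (1-t)^{-1 + k₁ - i p₁} · ₂F₁(1/2+k₁-k₁₂-i s₂, k₁+k₁₂-1/2-i s₂; 1-2i s₂; t) for t ∈ (0,1/2). Then h is integrable with respect to Lebesgue measure on (0,1/2), and lim_{t → 0⁺} t^{1/2} · |h(t)| = 1; that is, the integrand of I₂(+,C,+) exhibits only a mild t^{-1/2} divergence as t → 0, which is insufficient to cause problems with convergence at that endpoint. -/

import Mathlib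

open Complex Filter Set MeasureTheory

/-- The `n`-th term of the Gauss hypergeometric series `₂F₁(a,b;c;z)`. -/
noncomputable def hypTerm (a b c z : ℂ) (n : ℕ) : ℂ :=
  (ascPochhammer ℂ n).eval a * (ascPochhammer ℂ n).eval b /
    ((ascPochhammer ℂ n).eval c * (n.factorial : ℂ)) * z ^ n

/-- The Gauss hypergeometric function `₂F₁(a,b;c;z)`. -/
noncomputable def hyp (a b c z : ℂ) : ℂ := ∑' n, hypTerm a b c z n

/-- The integrand of `I₂(+,C,+)`:
`h(t) = t^(is₂-ip₂-1/2) (1-t)^(-1+k₁-ip₁) ₂F₁(1/2+k₁-k₁₂-is₂, k₁+k₁₂-1/2-is₂; 1-2is₂; t)`. -/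
noncomputable def hPCP (k₁ k₁₂ s₂ p₁ p₂ : ℝ) (t : ℝ) : ℂ :=
  ((t : ℝ) : ℂ) ^ (I * (s₂ : ℂ) - I * (p₂ : ℂ) - 1 / 2) *
    ((1 - t : ℝ) : ℂ) ^ (-1 + (k₁ : ℂ) - I * (p₁ : ℂ)) *
    hyp (1 / 2 + k₁ - k₁₂ - I * (s₂ : ℂ)) ((k₁ : ℂ) + k₁₂ - 1 / 2 - I * (s₂ : ℂ))
      (1 - 2 * I * (s₂ : ℂ)) t

lemma prodBound (m : ℕ) (hm : 1 ≤ m) (n : ℕ) :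
    ∏ i ∈ Finset.range n, ((m : ℝ) + i) ≤ n.factorial * ((m : ℝ) * (n + 1)) ^ m := by
  have hm' : (1 : ℝ) ≤ m := by exact_mod_cast hm
  induction n with
  | zero =>
    simp only [Finset.range_zero, Finset.prod_empty, Nat.factorial_zero, Nat.cast_one,
      Nat.cast_zero, zero_add, mul_one, one_mul]
    exact one_le_pow₀ hm'
  | succ n ih =>
    rw [Finset.prod_range_succ]
    have hx : (0 : ℝ) < (n : ℝ) + 1 := by positivity
    have hb : 1 + (m : ℝ) * ((1 : ℝ) / ((n : ℝ) + 1)) ≤ (1 + (1 : ℝ) / ((n : ℝ) + 1)) ^ m := by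
      have hd : (0:ℝ) ≤ 1 / ((n : ℝ) + 1) := by positivity
      have := one_add_mul_le_pow (a := (1 : ℝ) / ((n : ℝ) + 1)) (by linarith) m
      linarith [this]
    have h2 : (m : ℝ) * ((n : ℝ) + 2) = ((m : ℝ) * ((n : ℝ) + 1)) * (1 + 1 / ((n : ℝ) + 1)) := by
      field_simp; ring
    have hKpos : (0 : ℝ) ≤ ((m : ℝ) * ((n : ℝ) + 1)) ^ m := by positivity
    have key : ((m : ℝ) * ((n : ℝ) + 1)) ^ m * ((m : ℝ) + n)
        ≤ ((n : ℝ) + 1) * ((m : ℝ) * ((n : ℝ) + 2)) ^ m := by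
      rw [h2, mul_pow ((m : ℝ) * ((n : ℝ) + 1))]
      have h3 : ((m : ℝ) + n) ≤ ((n : ℝ) + 1) * (1 + (m : ℝ) * (1 / ((n : ℝ) + 1))) := by
        have : ((n : ℝ) + 1) * (1 + (m : ℝ) * (1 / ((n : ℝ) + 1))) = (n : ℝ) + 1 + m := by
          field_simp
        rw [this]; linarith
      calc ((m : ℝ) * ((n : ℝ) + 1)) ^ m * ((m : ℝ) + n)
          ≤ ((m : ℝ) * ((n : ℝ) + 1)) ^ m * (((n : ℝ) + 1) * (1 + (m : ℝ) * (1 / ((n : ℝ) + 1)))) := by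
            apply mul_le_mul_of_nonneg_left h3 hKpos
        _ ≤ ((m : ℝ) * ((n : ℝ) + 1)) ^ m * (((n : ℝ) + 1) * (1 + 1 / ((n : ℝ) + 1)) ^ m) := by
            apply mul_le_mul_of_nonneg_left _ hKpos
            exact mul_le_mul_of_nonneg_left hb (le_of_lt hx)
        _ = ((n : ℝ) + 1) * (((m : ℝ) * ((n : ℝ) + 1)) ^ m * (1 + 1 / ((n : ℝ) + 1)) ^ m) := by ring
    have hmn : (0 : ℝ) ≤ (m : ℝ) + n := by positivity
    calc (∏ i ∈ Finset.range n, ((m : ℝ) + i)) * ((m : ℝ) + n)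
        ≤ ((n.factorial : ℝ) * ((m : ℝ) * ((n : ℝ) + 1)) ^ m) * ((m : ℝ) + n) := by
          apply mul_le_mul_of_nonneg_right ih hmn
      _ = (n.factorial : ℝ) * (((m : ℝ) * ((n : ℝ) + 1)) ^ m * ((m : ℝ) + n)) := by ring
      _ ≤ (n.factorial : ℝ) * (((n : ℝ) + 1) * ((m : ℝ) * ((n : ℝ) + 2)) ^ m) := by
          apply mul_le_mul_of_nonneg_left key (by positivity)
      _ = ((n + 1).factorial : ℝ) * ((m : ℝ) * (((n + 1 : ℕ) : ℝ) + 1)) ^ m := by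
          rw [Nat.factorial_succ]; push_cast; ring

lemma pochUpper (x : ℂ) (M : ℝ) (hx : ‖x‖ ≤ M) (n : ℕ) :
    ‖((ascPochhammer ℂ n).eval x)‖ ≤ ∏ i ∈ Finset.range n, (M + i) := by
  have hM : 0 ≤ M := le_trans (norm_nonneg x) hx
  induction n with
  | zero => simp
  | succ n ih =>
    rw [ascPochhammer_succ_eval, norm_mul, Finset.prod_range_succ]
    apply mul_le_mul ih _ (norm_nonneg _) (Finset.prod_nonneg fun i _ => by positivity)
    calc ‖(x + n)‖ ≤ ‖x‖ + ‖(n : ℂ)‖ := norm_add_le _ _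
      _ ≤ M + n := by rw [Complex.norm_natCast]; exact add_le_add hx le_rfl

lemma pochLower (c : ℂ) (hc : ∀ j : ℕ, (1 : ℝ) + j ≤ ‖(c + j)‖) (n : ℕ) :
    (n.factorial : ℝ) ≤ ‖((ascPochhammer ℂ n).eval c)‖ := by
  induction n with
  | zero => simp
  | succ n ih =>
    rw [ascPochhammer_succ_eval, norm_mul, Nat.factorial_succ]
    push_cast
    calc ((n : ℝ) + 1) * (n.factorial : ℝ) = (n.factorial : ℝ) * (1 + n) := by ring
      _ ≤ ‖((ascPochhammer ℂ n).eval c)‖ * ‖(c + n)‖ := by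
          apply mul_le_mul ih (hc n) (by positivity) (norm_nonneg _)

lemma boundSummable (m : ℕ) :
    Summable (fun n : ℕ => ((m : ℝ) * (n + 1)) ^ (2 * m) * (1 / 2) ^ n) := by
  have h0 : Summable (fun n : ℕ => (n : ℝ) ^ (2 * m) * (1 / 2 : ℝ) ^ n) :=
    summable_pow_mul_geometric_of_norm_lt_one (2 * m) (by rw [Real.norm_eq_abs, abs_of_pos (by norm_num : (0:ℝ) < 1/2)]; norm_num)
  have h1 : Summable (fun n : ℕ => ((n + 1 : ℕ) : ℝ) ^ (2 * m) * (1 / 2 : ℝ) ^ (n + 1)) :=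
    (summable_nat_add_iff 1).2 h0
  have h2 := (h1.mul_left ((m : ℝ) ^ (2 * m) * 2))
  apply h2.congr
  intro n
  push_cast
  rw [mul_pow]
  ring

lemma termBound (a b c : ℂ) (m : ℕ) (hm : 1 ≤ m) (ha : ‖a‖ ≤ m)
    (hb : ‖b‖ ≤ m) (hc : ∀ j : ℕ, (1 : ℝ) + j ≤ ‖(c + j)‖)
    (z : ℂ) (hz : ‖z‖ ≤ 1 / 2) (n : ℕ) :
    ‖(hypTerm a b c z n)‖ ≤ ((m : ℝ) * (n + 1)) ^ (2 * m) * (1 / 2) ^ n := by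
  have hden : (0 : ℝ) < (n.factorial : ℝ) := by exact_mod_cast n.factorial_pos
  have hCl : (n.factorial : ℝ) ≤ ‖((ascPochhammer ℂ n).eval c)‖ := pochLower c hc n
  set K : ℝ := ((m : ℝ) * ((n : ℝ) + 1)) ^ m with hK
  have hKpos : (0 : ℝ) ≤ K := by positivity
  have hA : ‖((ascPochhammer ℂ n).eval a)‖ ≤ (n.factorial : ℝ) * K :=
    (pochUpper a m ha n).trans (prodBound m hm n)
  have hB : ‖((ascPochhammer ℂ n).eval b)‖ ≤ (n.factorial : ℝ) * K :=
    (pochUpper b m hb n).trans (prodBound m hm n)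
  rw [hypTerm, norm_mul, norm_div, norm_mul, norm_mul, norm_pow, Complex.norm_natCast]
  have hdiv : ‖((ascPochhammer ℂ n).eval a)‖ * ‖((ascPochhammer ℂ n).eval b)‖ /
      (‖((ascPochhammer ℂ n).eval c)‖ * (n.factorial : ℝ)) ≤ K * K := by
    have h1 : ‖((ascPochhammer ℂ n).eval a)‖ * ‖((ascPochhammer ℂ n).eval b)‖
        ≤ ((n.factorial : ℝ) * K) * ((n.factorial : ℝ) * K) :=
      mul_le_mul hA hB (norm_nonneg _) (by positivity)
    have h2 : (n.factorial : ℝ) * (n.factorial : ℝ)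
        ≤ ‖((ascPochhammer ℂ n).eval c)‖ * (n.factorial : ℝ) :=
      mul_le_mul_of_nonneg_right hCl hden.le
    have h3 : ‖((ascPochhammer ℂ n).eval a)‖ * ‖((ascPochhammer ℂ n).eval b)‖ /
        (‖((ascPochhammer ℂ n).eval c)‖ * (n.factorial : ℝ))
        ≤ ((n.factorial : ℝ) * K) * ((n.factorial : ℝ) * K) / ((n.factorial : ℝ) * (n.factorial : ℝ)) :=
      div_le_div₀ (by positivity) h1 (by positivity) h2
    refine h3.trans (le_of_eq ?_)
    field_simp
  have hzn : ‖z‖ ^ n ≤ (1 / 2 : ℝ) ^ n := pow_le_pow_left₀ (norm_nonneg z) hz n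
  have heq : ((m : ℝ) * ((n : ℝ) + 1)) ^ (2 * m) = K * K := by
    rw [hK, two_mul, pow_add]
  rw [heq]
  exact mul_le_mul hdiv hzn (by positivity) (by positivity)

lemma hyp_zero (a b c : ℂ) : hyp a b c 0 = 1 := by
  rw [hyp, tsum_eq_single 0]
  · simp [hypTerm]
  · intro n hn
    simp [hypTerm, zero_pow hn]

lemma hyp_bound_pack (a b c : ℂ) (hc : ∀ j : ℕ, (1 : ℝ) + j ≤ ‖(c + j)‖) :
    ∃ C : ℝ, 0 ≤ C ∧ (∀ z : ℂ, ‖z‖ ≤ 1 / 2 → ‖(hyp a b c z)‖ ≤ C) ∧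
      Continuous (fun t : ℝ => hyp a b c ((max 0 (min t (1 / 2)) : ℝ) : ℂ)) := by
  set m : ℕ := ⌈‖a‖ ⊔ ‖b‖⌉₊ + 1 with hm_def
  have hm : 1 ≤ m := Nat.le_add_left 1 _
  have ham : ‖a‖ ≤ m := by
    refine le_trans (le_max_left _ (‖b‖)) ?_
    refine le_trans (Nat.le_ceil _) ?_
    exact_mod_cast Nat.le_succ _
  have hbm : ‖b‖ ≤ m := by
    refine le_trans (le_max_right (‖a‖) _) ?_
    refine le_trans (Nat.le_ceil _) ?_
    exact_mod_cast Nat.le_succ _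
  set u : ℕ → ℝ := fun n => ((m : ℝ) * (n + 1)) ^ (2 * m) * (1 / 2) ^ n with hu_def
  have husum : Summable u := boundSummable m
  refine ⟨∑' n, u n, ?_, ?_, ?_⟩
  · exact tsum_nonneg fun n => by positivity
  · intro z hz
    have hsn : Summable fun n => ‖hypTerm a b c z n‖ := by
      refine husum.of_nonneg_of_le (fun n => norm_nonneg _) fun n => ?_
      exact termBound a b c m hm ham hbm hc z hz n
    rw [hyp]
    refine (norm_tsum_le_tsum_norm hsn).trans ?_
    refine Summable.tsum_le_tsum (fun n => ?_) hsn husum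
    exact termBound a b c m hm ham hbm hc z hz n
  · have hqcont : Continuous (fun t : ℝ => max 0 (min t (1 / 2))) :=
      continuous_const.max (continuous_id.min continuous_const)
    have hqmem : ∀ t : ℝ, ‖((max 0 (min t (1 / 2)) : ℝ) : ℂ)‖ ≤ 1 / 2 := by
      intro t
      have h0 : (0 : ℝ) ≤ max 0 (min t (1 / 2)) := le_max_left _ _
      rw [Complex.norm_of_nonneg h0]
      exact max_le (by norm_num) (min_le_right _ _)
    simp only [hyp]
    apply continuous_tsum (u := u)
    · intro n
      simp only [hypTerm]
      exact continuous_const.mul ((Complex.continuous_ofReal.comp hqcont).pow n)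
    · exact husum
    · intro n t
      exact termBound a b c m hm ham hbm hc _ (hqmem t) n

/-- For `k₁ ≥ 1` and `k₁₂ ≥ 1`, the integrand of `I₂(+,C,+)` is integrable on `(0,1/2)`
and exhibits only a mild `t^(-1/2)` divergence as `t → 0⁺`. -/
theorem integral_PCP_I2_first_piece (k₁ k₁₂ s₂ p₁ p₂ : ℝ)
    (h1 : 1 ≤ k₁) (h12 : 1 ≤ k₁₂) :
    IntegrableOn (hPCP k₁ k₁₂ s₂ p₁ p₂) (Ioo 0 (1 / 2)) volume ∧
    Tendsto (fun t : ℝ => t ^ ((1 : ℝ) / 2) * ‖(hPCP k₁ k₁₂ s₂ p₁ p₂ t)‖)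
      (nhdsWithin 0 (Ioi 0)) (nhds 1) := by
  have hc : ∀ j : ℕ, (1 : ℝ) + j ≤ ‖((1 - 2 * I * (s₂ : ℂ)) + j)‖ := by
    intro j
    have hre : ((1 : ℂ) - 2 * I * (s₂ : ℂ) + (j : ℂ)).re = 1 + j := by simp
    have := Complex.re_le_norm ((1 : ℂ) - 2 * I * (s₂ : ℂ) + (j : ℂ))
    rwa [hre] at this
  obtain ⟨C, hC0, hCb, hGcont⟩ :=
    hyp_bound_pack (1 / 2 + k₁ - k₁₂ - I * (s₂ : ℂ)) ((k₁ : ℂ) + k₁₂ - 1 / 2 - I * (s₂ : ℂ))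
      (1 - 2 * I * (s₂ : ℂ)) hc
  have hq : ∀ t ∈ Ioo (0 : ℝ) (1 / 2), max 0 (min t (1 / 2)) = t := by
    intro t ht
    rw [min_eq_left ht.2.le, max_eq_right ht.1.le]
  -- real part computations
  have hre1 : (I * (s₂ : ℂ) - I * (p₂ : ℂ) - 1 / 2).re = -(1 / 2) := by simp
  have hre2 : (-1 + (k₁ : ℂ) - I * (p₁ : ℂ)).re = -1 + k₁ := by simp
  have habs : ∀ t ∈ Ioo (0 : ℝ) (1 / 2),
      ‖(hPCP k₁ k₁₂ s₂ p₁ p₂ t)‖ =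
        t ^ (-(1 / 2) : ℝ) * ((1 - t) ^ (-1 + k₁) *
          ‖(hyp (1 / 2 + k₁ - k₁₂ - I * (s₂ : ℂ)) ((k₁ : ℂ) + k₁₂ - 1 / 2 - I * (s₂ : ℂ))
            (1 - 2 * I * (s₂ : ℂ)) t)‖) := by
    intro t ht
    rw [hPCP, norm_mul, norm_mul,
      Complex.norm_cpow_eq_rpow_re_of_pos ht.1,
      Complex.norm_cpow_eq_rpow_re_of_pos (by linarith [ht.2] : (0:ℝ) < 1 - t),
      hre1, hre2, mul_assoc]
  have hhypC : ∀ t ∈ Ioo (0 : ℝ) (1 / 2),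
      ‖(hyp (1 / 2 + k₁ - k₁₂ - I * (s₂ : ℂ)) ((k₁ : ℂ) + k₁₂ - 1 / 2 - I * (s₂ : ℂ))
        (1 - 2 * I * (s₂ : ℂ)) t)‖ ≤ C := by
    intro t ht
    apply hCb
    rw [Complex.norm_of_nonneg ht.1.le]
    exact ht.2.le
  have habsle : ∀ t ∈ Ioo (0 : ℝ) (1 / 2),
      ‖(hPCP k₁ k₁₂ s₂ p₁ p₂ t)‖ ≤ C * t ^ (-(1 / 2) : ℝ) := by
    intro t ht
    rw [habs t ht, mul_comm C]
    have hco : (0:ℝ) ≤ t ^ (-(1 / 2) : ℝ) := Real.rpow_nonneg ht.1.le _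
    apply mul_le_mul_of_nonneg_left _ hco
    have h1t : (1 - t) ^ (-1 + k₁) ≤ 1 :=
      Real.rpow_le_one (by linarith [ht.1, ht.2]) (by linarith [ht.1, ht.2]) (by linarith)
    calc (1 - t) ^ (-1 + k₁) * ‖(hyp _ _ _ _)‖
        ≤ 1 * C := mul_le_mul h1t (hhypC t ht) (norm_nonneg _) zero_le_one
      _ = C := one_mul C
  constructor
  · -- Integrability
    have hmeas : AEStronglyMeasurable (hPCP k₁ k₁₂ s₂ p₁ p₂)
        (volume.restrict (Ioo 0 (1 / 2))) := by
      have hφ : ContinuousOn (fun t : ℝ =>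
          ((t : ℝ) : ℂ) ^ (I * (s₂ : ℂ) - I * (p₂ : ℂ) - 1 / 2) *
          ((1 - t : ℝ) : ℂ) ^ (-1 + (k₁ : ℂ) - I * (p₁ : ℂ)) *
          hyp (1 / 2 + k₁ - k₁₂ - I * (s₂ : ℂ)) ((k₁ : ℂ) + k₁₂ - 1 / 2 - I * (s₂ : ℂ))
            (1 - 2 * I * (s₂ : ℂ)) ((max 0 (min t (1 / 2)) : ℝ) : ℂ)) (Ioo 0 (1 / 2)) := by
        intro t ht
        apply ContinuousWithinAt.mul
        apply ContinuousWithinAt.mul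
        · exact (Complex.continuousAt_ofReal_cpow_const t _ (Or.inr ht.1.ne')).continuousWithinAt
        · have h2 : ContinuousAt (fun s : ℝ => ((1 - s : ℝ) : ℂ) ^
              (-1 + (k₁ : ℂ) - I * (p₁ : ℂ))) t := by
            have hb : (1 : ℝ) - t ≠ 0 := ne_of_gt (by linarith [ht.2] : (0:ℝ) < 1 - t)
            exact (Complex.continuousAt_ofReal_cpow_const (1 - t) _ (Or.inr hb)).comp
              ((continuous_const.sub continuous_id).continuousAt)
          exact h2.continuousWithinAt
        · exact hGcont.continuousWithinAt
      refine (hφ.aestronglyMeasurable measurableSet_Ioo).congr ?_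
      filter_upwards [ae_restrict_mem measurableSet_Ioo] with t ht
      rw [hq t ht, hPCP]
    have hg : IntegrableOn (fun t : ℝ => C * t ^ (-(1 / 2) : ℝ)) (Ioo 0 (1 / 2)) volume := by
      have hii := intervalIntegral.intervalIntegrable_rpow' (r := -(1 / 2)) (by norm_num) (a := 0) (b := 1 / 2)
      rw [intervalIntegrable_iff_integrableOn_Ioo_of_le (by norm_num)] at hii
      exact hii.const_mul C
    refine Integrable.mono' hg hmeas ?_
    filter_upwards [ae_restrict_mem measurableSet_Ioo] with t ht
    exact habsle t ht
  · -- Tendsto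
    have hG0 : ‖(hyp (1 / 2 + k₁ - k₁₂ - I * (s₂ : ℂ))
        ((k₁ : ℂ) + k₁₂ - 1 / 2 - I * (s₂ : ℂ)) (1 - 2 * I * (s₂ : ℂ))
        ((max 0 (min (0:ℝ) (1 / 2)) : ℝ) : ℂ))‖ = 1 := by
      have : max 0 (min (0:ℝ) (1 / 2)) = 0 := by norm_num
      rw [this]
      norm_cast
      rw [hyp_zero]
      exact norm_one
    have hcont1 : ContinuousAt (fun t : ℝ => (1 - t) ^ (-1 + k₁)) 0 := by
      apply ContinuousAt.rpow_const
      · exact (continuous_const.sub continuous_id).continuousAt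
      · left; norm_num
    have hcont2 : ContinuousAt (fun t : ℝ =>
        ‖(hyp (1 / 2 + k₁ - k₁₂ - I * (s₂ : ℂ))
          ((k₁ : ℂ) + k₁₂ - 1 / 2 - I * (s₂ : ℂ)) (1 - 2 * I * (s₂ : ℂ))
          ((max 0 (min t (1 / 2)) : ℝ) : ℂ))‖) 0 :=
      (continuous_norm.comp hGcont).continuousAt
    have key := (hcont1.mul hcont2).tendsto
    have hval : (1 - (0:ℝ)) ^ (-1 + k₁) *
        ‖(hyp (1 / 2 + k₁ - k₁₂ - I * (s₂ : ℂ))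
          ((k₁ : ℂ) + k₁₂ - 1 / 2 - I * (s₂ : ℂ)) (1 - 2 * I * (s₂ : ℂ))
          ((max 0 (min (0:ℝ) (1 / 2)) : ℝ) : ℂ))‖ = 1 := by
      rw [hG0, mul_one, sub_zero, Real.one_rpow]
    simp only [Pi.mul_apply] at key
    rw [hval] at key
    refine Tendsto.congr' ?_ (key.mono_left nhdsWithin_le_nhds)
    filter_upwards [Ioo_mem_nhdsGT_of_mem (left_mem_Ico.2 (by norm_num : (0:ℝ) < 1/2))]
      with t ht
    simp only [Pi.mul_apply]
    rw [habs t ht, hq t ht, ← mul_assoc, ← Real.rpow_add ht.1]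
    norm_num
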